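/- External reduction is diamond: if t →x u1 and t →x u2 with u1 ≠ u2, then there exists a term q such that u1 →x q and u2 →x q. -/
import Mathlib


set_option maxHeartbeats 1000000

/-- λ-terms extended with named holes (named multi-contexts).
    A pure λ-term is a `Tm` satisfying `Tm.NoHole`. -/
inductive Tm where
  | var : ℕ → Tm
  | lam : ℕ → Tm → Tm
  | app : Tm → Tm → Tm
  | hole : ℕ → Tm
deriving DecidableEq

namespace Tm

def size : Tm → ℕ
  | var _ => 1
  | hole _ => 1
  | lam _ t => t.size + 1
  | app t u => t.size + u.size + 1

/-- Renaming of the free variable `y` to `z` (intended for fresh `z`). -/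
def rename (y z : ℕ) : Tm → Tm
  | var w => if w = y then var z else var w
  | hole a => hole a
  | lam w t => if w = y then lam w t else lam w (rename y z t)
  | app t u => app (rename y z t) (rename y z u)

theorem size_rename (y z : ℕ) : ∀ t : Tm, (rename y z t).size = t.size
  | var w => by by_cases h : w = y <;> simp [rename, h, size]
  | hole _ => rfl
  | lam w t => by
      by_cases h : w = y <;> simp [rename, h, size, size_rename y z t]
  | app t u => by simp [rename, size, size_rename y z t, size_rename y z u]

/-- Free variables. -/
def fv : Tm → List ℕ
  | var w => [w]
  | hole _ => []
  | lam w t => (fv t).filter (fun v => v ≠ w)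
  | app t u => fv t ++ fv u

/-- All variables occurring (free, bound and binders). -/
def allVars : Tm → List ℕ
  | var w => [w]
  | hole _ => []
  | lam w t => w :: allVars t
  | app t u => allVars t ++ allVars u

/-- The binders of a term, in order. -/
def binders : Tm → List ℕ
  | var _ => []
  | hole _ => []
  | lam w t => w :: binders t
  | app t u => binders t ++ binders u

/-- Names of the holes, in order. -/
def holes : Tm → List ℕ
  | var _ => []
  | hole a => [a]
  | lam _ t => holes t
  | app t u => holes t ++ holes u

/-- A pure λ-term: no named holes. -/
def NoHole (t : Tm) : Prop := t.holes = []

/-- Well-named: pairwise distinct bound names. -/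
def WellNamed (t : Tm) : Prop := t.binders.Nodup

/-- A variable fresh for the given list. -/
def freshVar (l : List ℕ) : ℕ := (l.foldr max 0) + 1

/-- Capture-avoiding substitution `t{x := u}` (as `Tm.subst x u t`). -/
def subst (x : ℕ) (u : Tm) : Tm → Tm
  | var w => if w = x then u else var w
  | hole a => hole a
  | app t v => app (subst x u t) (subst x u v)
  | lam w t =>
      if w = x then lam w t
      else if w ∈ u.fv then
        let z := freshVar (x :: (u.fv ++ t.fv ++ [w]))
        lam z (subst x u (rename w z t))
      else lam w (subst x u t)
  termination_by t => t.size
  decreasing_by all_goals simp [size, size_rename] <;> omega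

/-- Capture-allowing plugging of `c` for the hole named `a` (as `Tm.plug a c t`). -/
def plug (a : ℕ) (c : Tm) : Tm → Tm
  | var w => var w
  | hole b => if b = a then c else hole b
  | lam w t => lam w (plug a c t)
  | app t u => app (plug a c t) (plug a c u)

end Tm

/-- α-equivalence (generating relation). -/
inductive Alpha : Tm → Tm → Prop
  | var (x : ℕ) : Alpha (.var x) (.var x)
  | hole (a : ℕ) : Alpha (.hole a) (.hole a)
  | app {t t' u u' : Tm} : Alpha t t' → Alpha u u' → Alpha (.app t u) (.app t' u')
  | lam (x y : ℕ) (t u : Tm) :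
      (∀ z, z ∉ t.allVars → z ∉ u.allVars → Alpha (t.rename x z) (u.rename y z)) →
      Alpha (.lam x t) (.lam y u)

/-- α-equivalence, as an equivalence relation. -/
def AEq : Tm → Tm → Prop := Relation.EqvGen Alpha

/-- Root β-reduction: (λx.t)u ↦β t{x:=u}. -/
inductive Root : Tm → Tm → Prop
  | beta (x : ℕ) (t u : Tm) : Root (.app (.lam x t) u) (Tm.subst x u t)

/-- One-hole contexts. -/
inductive Ctx where
  | hole : Ctx
  | lam : ℕ → Ctx → Ctx
  | appL : Ctx → Tm → Ctx
  | appR : Tm → Ctx → Ctx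

/-- Plugging a term in a one-hole context. -/
def Ctx.fill : Ctx → Tm → Tm
  | .hole, t => t
  | .lam x C, t => .lam x (C.fill t)
  | .appL C u, t => .app (C.fill t) u
  | .appR u C, t => .app u (C.fill t)

/-- β-reduction: closure of root β under arbitrary contexts. -/
def Beta (t u : Tm) : Prop :=
  ∃ (C : Ctx) (a b : Tm), Root a b ∧ t = C.fill a ∧ u = C.fill b

mutual
  /-- NeutralTm terms: n ::= x | n f. -/
  inductive NeutralTm : Tm → Prop
    | var (x : ℕ) : NeutralTm (.var x)
    | app {n f : Tm} : NeutralTm n → NormalTm f → NeutralTm (.app n f)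
  /-- NormalTm forms: f ::= n | λx.f. -/
  inductive NormalTm : Tm → Prop
    | neu {n : Tm} : NeutralTm n → NormalTm n
    | lam (x : ℕ) {f : Tm} : NormalTm f → NormalTm (.lam x f)
end

/-- Rigid terms: r ::= x | r t. -/
inductive RigidTm : Tm → Prop
  | var (x : ℕ) : RigidTm (.var x)
  | app {r t : Tm} : RigidTm r → RigidTm (.app r t)

mutual
  /-- NeutralTm contexts: N ::= ⟨·⟩ | n L | N t. -/
  inductive NeutralCtx : Ctx → Prop
    | hole : NeutralCtx .hole
    | appR {n : Tm} {L : Ctx} : NeutralTm n → LeftmostCtx L → NeutralCtx (.appR n L)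
    | appL {N : Ctx} {t : Tm} : NeutralCtx N → NeutralCtx (.appL N t)
  /-- Leftmost contexts: L ::= N | λx.L. -/
  inductive LeftmostCtx : Ctx → Prop
    | neu {N : Ctx} : NeutralCtx N → LeftmostCtx N
    | lam (x : ℕ) {L : Ctx} : LeftmostCtx L → LeftmostCtx (.lam x L)
end

mutual
  /-- Rigid contexts: S ::= ⟨·⟩ | r B | S t. -/
  inductive RigidCtx : Ctx → Prop
    | hole : RigidCtx .hole
    | appR {r : Tm} {B : Ctx} : RigidTm r → ExtCtx B → RigidCtx (.appR r B)
    | appL {S : Ctx} {t : Tm} : RigidCtx S → RigidCtx (.appL S t)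
  /-- External contexts: B ::= S | λx.B. -/
  inductive ExtCtx : Ctx → Prop
    | rig {S : Ctx} : RigidCtx S → ExtCtx S
    | lam (x : ℕ) {B : Ctx} : ExtCtx B → ExtCtx (.lam x B)
end

/-- Leftmost(-outermost) reduction: closure of root β under leftmost contexts. -/
def LoStep (t u : Tm) : Prop :=
  ∃ (C : Ctx) (a b : Tm), LeftmostCtx C ∧ Root a b ∧ t = C.fill a ∧ u = C.fill b

/-- External reduction: closure of root β under external contexts. -/
def XStep (t u : Tm) : Prop :=
  ∃ (C : Ctx) (a b : Tm), ExtCtx C ∧ Root a b ∧ t = C.fill a ∧ u = C.fill b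

/-- External reduction, on α-equivalence classes (via representatives). -/
def XStepA (t u : Tm) : Prop := ∃ t' u', AEq t t' ∧ XStep t' u' ∧ AEq u' u

/-- Leftmost reduction, on α-equivalence classes (via representatives). -/
def LoStepA (t u : Tm) : Prop := ∃ t' u', AEq t t' ∧ LoStep t' u' ∧ AEq u' u

/-- `NSteps r k a b`: a sequence of exactly `k` `r`-steps from `a` to `b`. -/
inductive NSteps {α : Type*} (r : α → α → Prop) : ℕ → α → α → Prop
  | refl (a : α) : NSteps r 0 a a
  | step {a b c : α} {n : ℕ} : r a b → NSteps r n b c → NSteps r (n + 1) a c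

section XDiamondAux

/-- Size of a one-hole context. -/
def Ctx.csize : Ctx → ℕ
  | .hole => 0
  | .lam _ C => C.csize + 1
  | .appL C _ => C.csize + 1
  | .appR _ C => C.csize + 1

/-- Reduction under a rigid context. -/
def RStep (t u : Tm) : Prop :=
  ∃ (C : Ctx) (a b : Tm), RigidCtx C ∧ Root a b ∧ t = C.fill a ∧ u = C.fill b

lemma rstep_xstep {t u : Tm} (h : RStep t u) : XStep t u := by
  obtain ⟨C, a, b, hC, hr, ht, hu⟩ := h
  exact ⟨C, a, b, ExtCtx.rig hC, hr, ht, hu⟩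

lemma rstep_appL {t u v : Tm} (h : RStep t u) :
    RStep (.app t v) (.app u v) := by
  obtain ⟨C, a, b, hC, hr, ht, hu⟩ := h
  exact ⟨.appL C v, a, b, RigidCtx.appL hC, hr, by simp [Ctx.fill, ht], by simp [Ctx.fill, hu]⟩

lemma rstep_appR {r t u : Tm} (hrig : RigidTm r) (h : XStep t u) :
    RStep (.app r t) (.app r u) := by
  obtain ⟨C, a, b, hC, hr, ht, hu⟩ := h
  exact ⟨.appR r C, a, b, RigidCtx.appR hrig hC, hr, by simp [Ctx.fill, ht], by simp [Ctx.fill, hu]⟩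

lemma xstep_lam {t u : Tm} (x : ℕ) (h : XStep t u) :
    XStep (.lam x t) (.lam x u) := by
  obtain ⟨C, a, b, hC, hr, ht, hu⟩ := h
  exact ⟨.lam x C, a, b, ExtCtx.lam x hC, hr, by simp [Ctx.fill, ht], by simp [Ctx.fill, hu]⟩

lemma root_inv {a b : Tm} (h : Root a b) :
    ∃ x s u, a = .app (.lam x s) u ∧ b = Tm.subst x u s := by
  cases h with | beta x s u => exact ⟨x, s, u, rfl, rfl⟩

lemma root_det {a b₁ b₂ : Tm} (h₁ : Root a b₁) (h₂ : Root a b₂) : b₁ = b₂ := by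
  cases h₁; cases h₂; rfl

lemma rigid_fill_eq_lam {S : Ctx} {a s : Tm} {x : ℕ}
    (hS : RigidCtx S) (h : S.fill a = .lam x s) : S = .hole ∧ a = .lam x s := by
  cases hS with
  | hole => exact ⟨rfl, h⟩
  | appR hr hB => simp [Ctx.fill] at h
  | appL hS' => simp [Ctx.fill] at h

lemma rigid_fill_ne_lam {S : Ctx} {a b s : Tm} {x : ℕ}
    (hS : RigidCtx S) (hr : Root a b) : S.fill a ≠ .lam x s := by
  intro h
  obtain ⟨_, ha⟩ := rigid_fill_eq_lam hS h
  obtain ⟨y, s', u, haa, _⟩ := root_inv hr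
  rw [haa] at ha
  cases ha

lemma rigid_fill_rigid {S : Ctx} {a c : Tm}
    (hS : RigidCtx S) (hr : Root a c) (h : RigidTm (S.fill a)) (b : Tm) :
    RigidTm (S.fill b) := by
  induction S with
  | hole =>
      obtain ⟨x, s, u, ha, _⟩ := root_inv hr
      rw [show Ctx.fill .hole a = a from rfl, ha] at h
      cases h with | app hl => cases hl
  | lam y C ih => cases hS
  | appL C v ih =>
      cases hS with
      | appL hC =>
          simp only [Ctx.fill] at h ⊢
          cases h with
          | app hl => exact RigidTm.app (ih hC hl)
  | appR r C ih =>
      cases hS with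
      | appR hrig hB =>
          simp only [Ctx.fill] at h ⊢
          exact RigidTm.app hrig

end XDiamondAux

lemma xdiamond_main (n : ℕ) :
    (∀ C₁ C₂ a₁ b₁ a₂ b₂, C₁.csize + C₂.csize ≤ n →
      RigidCtx C₁ → RigidCtx C₂ → Root a₁ b₁ → Root a₂ b₂ →
      C₁.fill a₁ = C₂.fill a₂ →
      C₁.fill b₁ = C₂.fill b₂ ∨ ∃ q, RStep (C₁.fill b₁) q ∧ RStep (C₂.fill b₂) q) ∧
    (∀ C₁ C₂ a₁ b₁ a₂ b₂, C₁.csize + C₂.csize + 1 ≤ n →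
      ExtCtx C₁ → ExtCtx C₂ → Root a₁ b₁ → Root a₂ b₂ →
      C₁.fill a₁ = C₂.fill a₂ →
      C₁.fill b₁ = C₂.fill b₂ ∨ ∃ q, XStep (C₁.fill b₁) q ∧ XStep (C₂.fill b₂) q) := by
  induction n using Nat.strong_induction_on with
  | _ n IH =>
  have hrigpart :
      ∀ C₁ C₂ a₁ b₁ a₂ b₂, C₁.csize + C₂.csize ≤ n →
      RigidCtx C₁ → RigidCtx C₂ → Root a₁ b₁ → Root a₂ b₂ →
      C₁.fill a₁ = C₂.fill a₂ →
      C₁.fill b₁ = C₂.fill b₂ ∨ ∃ q, RStep (C₁.fill b₁) q ∧ RStep (C₂.fill b₂) q := by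
    intro C₁ C₂ a₁ b₁ a₂ b₂ hn h1 h2 hr1 hr2 heq
    cases C₁ with
    | hole =>
        cases C₂ with
        | hole =>
            left
            have : a₁ = a₂ := heq
            subst this
            exact root_det hr1 hr2
        | lam y C => cases h2
        | appL S v =>
            exfalso
            cases h2 with
            | appL hS =>
                obtain ⟨x, s, u, ha, _⟩ := root_inv hr1
                rw [ha] at heq
                simp only [Ctx.fill, Tm.app.injEq] at heq
                exact rigid_fill_ne_lam hS hr2 heq.1.symm
        | appR r B =>
            exfalso
            cases h2 with
            | appR hrig hB =>
                obtain ⟨x, s, u, ha, _⟩ := root_inv hr1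
                rw [ha] at heq
                simp only [Ctx.fill, Tm.app.injEq] at heq
                rw [← heq.1] at hrig
                cases hrig
    | lam y C => cases h1
    | appL S₁ v₁ =>
        cases h1 with
        | appL hS₁ =>
        cases C₂ with
        | hole =>
            exfalso
            obtain ⟨x, s, u, ha, _⟩ := root_inv hr2
            have heq' : Ctx.fill (.appL S₁ v₁) a₁ = a₂ := heq
            rw [ha] at heq'
            simp only [Ctx.fill, Tm.app.injEq] at heq'
            exact rigid_fill_ne_lam hS₁ hr1 heq'.1
        | lam y C => cases h2
        | appL S₂ v₂ =>
            cases h2 with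
            | appL hS₂ =>
            simp only [Ctx.fill, Tm.app.injEq] at heq
            obtain ⟨heqS, heqv⟩ := heq
            simp only [Ctx.csize] at hn
            have hlt : S₁.csize + S₂.csize < n := by omega
            have := (IH _ hlt).1 S₁ S₂ a₁ b₁ a₂ b₂ (le_refl _) hS₁ hS₂ hr1 hr2 heqS
            rcases this with heqb | ⟨q, hq1, hq2⟩
            · left; simp only [Ctx.fill]; rw [heqb, heqv]
            · right
              refine ⟨.app q v₁, ?_, ?_⟩
              · exact rstep_appL hq1
              · rw [show Ctx.fill (.appL S₂ v₂) b₂ = .app (S₂.fill b₂) v₂ from rfl, ← heqv]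
                exact rstep_appL hq2
        | appR r B =>
            cases h2 with
            | appR hrig hB =>
            simp only [Ctx.fill, Tm.app.injEq] at heq
            obtain ⟨heqS, heqv⟩ := heq
            have hrig1 : RigidTm (S₁.fill b₁) := by
              apply rigid_fill_rigid hS₁ hr1
              rw [heqS]; exact hrig
            right
            refine ⟨.app (S₁.fill b₁) (B.fill b₂), ?_, ?_⟩
            · exact ⟨.appR (S₁.fill b₁) B, a₂, b₂, RigidCtx.appR hrig1 hB, hr2,
                by simp [Ctx.fill, heqv], by simp [Ctx.fill]⟩
            · exact ⟨.appL S₁ (B.fill b₂), a₁, b₁, RigidCtx.appL hS₁, hr1,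
                by simp [Ctx.fill, heqS], by simp [Ctx.fill]⟩
    | appR r B =>
        cases h1 with
        | appR hrig hB =>
        cases C₂ with
        | hole =>
            exfalso
            obtain ⟨x, s, u, ha, _⟩ := root_inv hr2
            have heq' : Ctx.fill (.appR r B) a₁ = a₂ := heq
            rw [ha] at heq'
            simp only [Ctx.fill, Tm.app.injEq] at heq'
            rw [heq'.1] at hrig
            cases hrig
        | lam y C => cases h2
        | appL S₂ v₂ =>
            cases h2 with
            | appL hS₂ =>
            simp only [Ctx.fill, Tm.app.injEq] at heq
            obtain ⟨heqS, heqv⟩ := heq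
            have hrig2 : RigidTm (S₂.fill b₂) := by
              apply rigid_fill_rigid hS₂ hr2
              rw [← heqS]; exact hrig
            right
            refine ⟨.app (S₂.fill b₂) (B.fill b₁), ?_, ?_⟩
            · exact ⟨.appL S₂ (B.fill b₁), a₂, b₂, RigidCtx.appL hS₂, hr2,
                by simp [Ctx.fill, heqS], by simp [Ctx.fill]⟩
            · exact ⟨.appR (S₂.fill b₂) B, a₁, b₁, RigidCtx.appR hrig2 hB, hr1,
                by simp [Ctx.fill, heqv], by simp [Ctx.fill]⟩
        | appR r₂ B₂ =>
            cases h2 with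
            | appR hrig2 hB2 =>
            simp only [Ctx.fill, Tm.app.injEq] at heq
            obtain ⟨heqr, heqB⟩ := heq
            simp only [Ctx.csize] at hn
            have hlt : B.csize + B₂.csize + 1 < n := by omega
            have := (IH _ hlt).2 B B₂ a₁ b₁ a₂ b₂ (le_refl _) hB hB2 hr1 hr2 heqB
            rcases this with heqb | ⟨q, hq1, hq2⟩
            · left; simp only [Ctx.fill]; rw [heqb, heqr]
            · right
              refine ⟨.app r q, rstep_appR hrig hq1, ?_⟩
              rw [show Ctx.fill (.appR r₂ B₂) b₂ = .app r₂ (B₂.fill b₂) from rfl, ← heqr]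
              exact rstep_appR hrig hq2
  refine ⟨hrigpart, ?_⟩
  intro C₁ C₂ a₁ b₁ a₂ b₂ hn h1 h2 hr1 hr2 heq
  cases C₁ with
  | lam x C₁' =>
      have hC₁' : ExtCtx C₁' := by
        cases h1 with
        | rig hS => cases hS
        | lam _ h => exact h
      cases C₂ with
      | lam y C₂' =>
          have hC₂' : ExtCtx C₂' := by
            cases h2 with
            | rig hS => cases hS
            | lam _ h => exact h
          simp only [Ctx.fill, Tm.lam.injEq] at heq
          obtain ⟨hxy, heqf⟩ := heq
          simp only [Ctx.csize] at hn
          have hlt : C₁'.csize + C₂'.csize + 1 < n := by omega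
          have := (IH _ hlt).2 C₁' C₂' a₁ b₁ a₂ b₂ (le_refl _) hC₁' hC₂' hr1 hr2 heqf
          rcases this with heqb | ⟨q, hq1, hq2⟩
          · left; simp only [Ctx.fill]; rw [heqb, hxy]
          · right
            refine ⟨.lam x q, xstep_lam x hq1, ?_⟩
            rw [show Ctx.fill (.lam y C₂') b₂ = .lam y (C₂'.fill b₂) from rfl, ← hxy]
            exact xstep_lam x hq2
      | hole =>
          exfalso
          have hS : RigidCtx Ctx.hole := RigidCtx.hole
          exact rigid_fill_ne_lam hS hr2 (heq.symm)
      | appL S v =>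
          exfalso
          have hS : RigidCtx (Ctx.appL S v) := by
            cases h2 with
            | rig hS => exact hS
          exact rigid_fill_ne_lam hS hr2 (heq.symm)
      | appR r B =>
          exfalso
          have hS : RigidCtx (Ctx.appR r B) := by
            cases h2 with
            | rig hS => exact hS
          exact rigid_fill_ne_lam hS hr2 (heq.symm)
  | hole =>
      have hS₁ : RigidCtx Ctx.hole := RigidCtx.hole
      cases C₂ with
      | lam y C₂' =>
          exfalso
          exact rigid_fill_ne_lam hS₁ hr1 heq
      | hole =>
          rcases hrigpart _ _ _ _ _ _ (by omega) hS₁ RigidCtx.hole hr1 hr2 heq with h | ⟨q, hq1, hq2⟩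
          · exact Or.inl h
          · exact Or.inr ⟨q, rstep_xstep hq1, rstep_xstep hq2⟩
      | appL S v =>
          have hS₂ : RigidCtx (Ctx.appL S v) := by
            cases h2 with | rig hS => exact hS
          rcases hrigpart _ _ _ _ _ _ (by omega) hS₁ hS₂ hr1 hr2 heq with h | ⟨q, hq1, hq2⟩
          · exact Or.inl h
          · exact Or.inr ⟨q, rstep_xstep hq1, rstep_xstep hq2⟩
      | appR r B =>
          have hS₂ : RigidCtx (Ctx.appR r B) := by
            cases h2 with | rig hS => exact hS
          rcases hrigpart _ _ _ _ _ _ (by omega) hS₁ hS₂ hr1 hr2 heq with h | ⟨q, hq1, hq2⟩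
          · exact Or.inl h
          · exact Or.inr ⟨q, rstep_xstep hq1, rstep_xstep hq2⟩
  | appL S₁ v₁ =>
      have hS₁ : RigidCtx (Ctx.appL S₁ v₁) := by
        cases h1 with | rig hS => exact hS
      cases C₂ with
      | lam y C₂' =>
          exfalso
          exact rigid_fill_ne_lam hS₁ hr1 heq
      | hole =>
          rcases hrigpart _ _ _ _ _ _ (by omega) hS₁ RigidCtx.hole hr1 hr2 heq with h | ⟨q, hq1, hq2⟩
          · exact Or.inl h
          · exact Or.inr ⟨q, rstep_xstep hq1, rstep_xstep hq2⟩
      | appL S v =>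
          have hS₂ : RigidCtx (Ctx.appL S v) := by
            cases h2 with | rig hS => exact hS
          rcases hrigpart _ _ _ _ _ _ (by omega) hS₁ hS₂ hr1 hr2 heq with h | ⟨q, hq1, hq2⟩
          · exact Or.inl h
          · exact Or.inr ⟨q, rstep_xstep hq1, rstep_xstep hq2⟩
      | appR r B =>
          have hS₂ : RigidCtx (Ctx.appR r B) := by
            cases h2 with | rig hS => exact hS
          rcases hrigpart _ _ _ _ _ _ (by omega) hS₁ hS₂ hr1 hr2 heq with h | ⟨q, hq1, hq2⟩
          · exact Or.inl h
          · exact Or.inr ⟨q, rstep_xstep hq1, rstep_xstep hq2⟩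
  | appR r₁ B₁ =>
      have hS₁ : RigidCtx (Ctx.appR r₁ B₁) := by
        cases h1 with | rig hS => exact hS
      cases C₂ with
      | lam y C₂' =>
          exfalso
          exact rigid_fill_ne_lam hS₁ hr1 heq
      | hole =>
          rcases hrigpart _ _ _ _ _ _ (by omega) hS₁ RigidCtx.hole hr1 hr2 heq with h | ⟨q, hq1, hq2⟩
          · exact Or.inl h
          · exact Or.inr ⟨q, rstep_xstep hq1, rstep_xstep hq2⟩
      | appL S v =>
          have hS₂ : RigidCtx (Ctx.appL S v) := by
            cases h2 with | rig hS => exact hS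
          rcases hrigpart _ _ _ _ _ _ (by omega) hS₁ hS₂ hr1 hr2 heq with h | ⟨q, hq1, hq2⟩
          · exact Or.inl h
          · exact Or.inr ⟨q, rstep_xstep hq1, rstep_xstep hq2⟩
      | appR r B =>
          have hS₂ : RigidCtx (Ctx.appR r B) := by
            cases h2 with | rig hS => exact hS
          rcases hrigpart _ _ _ _ _ _ (by omega) hS₁ hS₂ hr1 hr2 heq with h | ⟨q, hq1, hq2⟩
          · exact Or.inl h
          · exact Or.inr ⟨q, rstep_xstep hq1, rstep_xstep hq2⟩

/-- external reduction is diamond. -/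
theorem external_diamond (t u₁ u₂ : Tm) (ht : t.NoHole)
    (h₁ : XStep t u₁) (h₂ : XStep t u₂) (hne : u₁ ≠ u₂) :
    ∃ q, XStep u₁ q ∧ XStep u₂ q := by
  obtain ⟨C₁, a₁, b₁, hC₁, hr₁, ht₁, hu₁⟩ := h₁
  obtain ⟨C₂, a₂, b₂, hC₂, hr₂, ht₂, hu₂⟩ := h₂
  have heq : C₁.fill a₁ = C₂.fill a₂ := by rw [← ht₁, ← ht₂]
  rcases (xdiamond_main (C₁.csize + C₂.csize + 1)).2 C₁ C₂ a₁ b₁ a₂ b₂ (le_refl _)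
      hC₁ hC₂ hr₁ hr₂ heq with h | ⟨q, hq1, hq2⟩
  · exfalso; apply hne; rw [hu₁, hu₂, h]
  · exact ⟨q, by rw [hu₁]; exact hq1, by rw [hu₂]; exact hq2⟩
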